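/- Let (Ω, 𝒜, μ) be a measure space with μ a positive finite measure, let E be a separable real Banach space, let F : Ω → Set E be a set-valued map, and let a ∈ E. Suppose that every Bochner integrable function f : Ω → E satisfying f(ω) ∈ F(ω) for μ-almost every ω has Bochner integral ∫_Ω f dμ = a. Then any two Bochner integrable functions x₁, x₂ : Ω → E with x₁(ω) ∈ F(ω) μ-a.e. and x₂(ω) ∈ F(ω) μ-a.e. satisfy x₁ = x₂ μ-almost everywhere. -/

import Mathlib

open MeasureTheory

/-! Gluing two integrable selections `x₁, x₂` along a measurable set `s` gives a third one,
`s.piecewise x₁ x₂`. Comparing its integral with that of `x₂` shows that `x₁` and `x₂` have the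
same integral over `s`; as `s` is arbitrary, `x₁ = x₂` almost everywhere. -/

section

variable {Ω E : Type*} [MeasurableSpace Ω] {μ : Measure Ω}
  [NormedAddCommGroup E] [NormedSpace ℝ E] [CompleteSpace E]

open Classical in
theorem ae_eq_of_forall_integral_piecewise_eq {f g : Ω → E} (hf : Integrable f μ)
    (hg : Integrable g μ)
    (h : ∀ s, MeasurableSet s → ∫ ω, s.piecewise f g ω ∂μ = ∫ ω, g ω ∂μ) : f =ᵐ[μ] g := by
  refine hf.ae_eq_of_forall_setIntegral_eq f g hg fun s hs _ => ?_
  have hs_eq := h s hs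
  rw [integral_piecewise hs hf.integrableOn hg.integrableOn, ← integral_add_compl hs hg] at hs_eq
  exact add_right_cancel hs_eq

end

theorem Filter.Eventually.piecewise_mem {Ω E : Type*} {l : Filter Ω} {F : Ω → Set E}
    {f g : Ω → E} (s : Set Ω) [DecidablePred (· ∈ s)] (hf : ∀ᶠ ω in l, f ω ∈ F ω)
    (hg : ∀ᶠ ω in l, g ω ∈ F ω) : ∀ᶠ ω in l, s.piecewise f g ω ∈ F ω := by
  filter_upwards [hf, hg] with ω hfω hgω
  by_cases hω : ω ∈ s
  · simpa [hω] using hfω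
  · simpa [hω] using hgω

theorem ae_eq_of_aumann_integral_singleton_general
    {Ω : Type*} [MeasurableSpace Ω] {μ : Measure Ω}
    {E : Type*} [NormedAddCommGroup E] [NormedSpace ℝ E] [CompleteSpace E]
    (F : Ω → Set E) (a : E)
    (hF : ∀ f : Ω → E, Integrable f μ → (∀ᵐ ω ∂μ, f ω ∈ F ω) → ∫ ω, f ω ∂μ = a)
    (x₁ x₂ : Ω → E) (hx₁ : Integrable x₁ μ) (hx₂ : Integrable x₂ μ)
    (hx₁F : ∀ᵐ ω ∂μ, x₁ ω ∈ F ω) (hx₂F : ∀ᵐ ω ∂μ, x₂ ω ∈ F ω) :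
    x₁ =ᵐ[μ] x₂ := by
  classical
  refine ae_eq_of_forall_integral_piecewise_eq hx₁ hx₂ fun s hs => ?_
  have hglued : Integrable (s.piecewise x₁ x₂) μ :=
    Integrable.piecewise hs hx₁.integrableOn hx₂.integrableOn
  exact (hF _ hglued (hx₁F.piecewise_mem s hx₂F)).trans (hF x₂ hx₂ hx₂F).symm

/-- If every Bochner integrable selection of `F` has integral `a`, then any two
such selections agree almost everywhere. -/
theorem ae_eq_of_aumann_integral_singleton
    {Ω : Type*} [MeasurableSpace Ω] {μ : Measure Ω} [IsFiniteMeasure μ]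
    {E : Type*} [NormedAddCommGroup E] [NormedSpace ℝ E] [CompleteSpace E]
    [TopologicalSpace.SeparableSpace E]
    (F : Ω → Set E) (a : E)
    (hF : ∀ f : Ω → E, Integrable f μ → (∀ᵐ ω ∂μ, f ω ∈ F ω) → ∫ ω, f ω ∂μ = a)
    (x₁ x₂ : Ω → E) (hx₁ : Integrable x₁ μ) (hx₂ : Integrable x₂ μ)
    (hx₁F : ∀ᵐ ω ∂μ, x₁ ω ∈ F ω) (hx₂F : ∀ᵐ ω ∂μ, x₂ ω ∈ F ω) :
    x₁ =ᵐ[μ] x₂ :=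
  ae_eq_of_aumann_integral_singleton_general F a hF x₁ x₂ hx₁ hx₂ hx₁F hx₂F
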